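/- Let M be a matching in a weighted graph such that every edge e of the graph is either in M or is adjacent to some edge e' ∈ M with w(e') ≥ w(e). Then for any matching M*, w(M) ≥ w(M*)/2. -/

import Mathlib

/-- Two edges (as unordered pairs) are adjacent: they share an endpoint. -/
def EdgeAdj {V : Type*} (e e' : Sym2 V) : Prop := ∃ v : V, v ∈ e ∧ v ∈ e'

/-- `M` is a matching in the graph `G`: its members are edges of `G` that are
pairwise vertex-disjoint. -/
def IsMatchingIn {V : Type*} (G : SimpleGraph V) (M : Finset (Sym2 V)) : Prop :=
  (∀ e ∈ M, e ∈ G.edgeSet) ∧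
  (∀ e ∈ M, ∀ e' ∈ M, e ≠ e' → ∀ v : V, v ∈ e → v ∉ e')

/-!
Charge every edge `e ∈ M*` to an edge of `M` that is adjacent to it (or equal to it) and at
least as heavy. An edge of `M` receives charge only from `M*`-edges through its two
endpoints, and each endpoint lies on at most one edge of the matching `M*`, so every edge of
`M` is charged at most twice.
-/

open Finset

theorem EdgeAdj.refl {V : Type*} (e : Sym2 V) : EdgeAdj e e :=
  ⟨e.out.1, Sym2.out_fst_mem e, Sym2.out_fst_mem e⟩

theorem edgeAdj_mk_iff {V : Type*} (e : Sym2 V) (a b : V) :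
    EdgeAdj e s(a, b) ↔ a ∈ e ∨ b ∈ e := by
  simp only [EdgeAdj, Sym2.mem_iff]
  grind

namespace IsMatchingIn

variable {V : Type*} {G : SimpleGraph V} {N : Finset (Sym2 V)}

open Classical in
theorem card_filter_mem_le_one (hN : IsMatchingIn G N) (v : V) :
    #{e ∈ N | v ∈ e} ≤ 1 :=
  card_le_one.2 fun e he e' he' => by
    rw [mem_filter] at he he'
    by_contra hne
    exact hN.2 e he.1 e' he'.1 hne v he.2 he'.2

open Classical in
theorem card_filter_edgeAdj_le_two (hN : IsMatchingIn G N) (e' : Sym2 V) :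
    #{e ∈ N | EdgeAdj e e'} ≤ 2 := by
  induction e' using Sym2.ind with
  | _ a b =>
    simp_rw [edgeAdj_mk_iff, filter_or]
    exact (card_union_le _ _).trans
      (add_le_add (hN.card_filter_mem_le_one a) (hN.card_filter_mem_le_one b))

end IsMatchingIn

theorem Finset.sum_le_mul_sum_of_exists_dominating {α β : Type*} [DecidableEq β]
    {S : Finset α} {T : Finset β} {r : α → β → Prop} [DecidableRel r] {f : α → ℝ}
    {g : β → ℝ} {k : ℕ} (hg : ∀ t ∈ T, 0 ≤ g t)
    (hdom : ∀ s ∈ S, ∃ t ∈ T, r s t ∧ f s ≤ g t) (hdeg : ∀ t ∈ T, #{s ∈ S | r s t} ≤ k) :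
    ∑ s ∈ S, f s ≤ k * ∑ t ∈ T, g t := by
  rcases S.eq_empty_or_nonempty with rfl | ⟨s₀, hs₀⟩
  · simpa using mul_nonneg k.cast_nonneg (sum_nonneg hg)
  have : Nonempty β := let ⟨t, _⟩ := hdom s₀ hs₀; ⟨t⟩
  choose! φ hφT hφr hφf using hdom
  have hfiber : ∀ t ∈ T, #{s ∈ S | φ s = t} ≤ k := fun t ht =>
    (card_le_card fun s hs => by
      obtain ⟨hsS, rfl⟩ := mem_filter.1 hs
      exact mem_filter.2 ⟨hsS, hφr s hsS⟩).trans (hdeg t ht)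
  calc ∑ s ∈ S, f s ≤ ∑ s ∈ S, g (φ s) := sum_le_sum hφf
    _ = ∑ t ∈ T, ∑ s ∈ S with φ s = t, g (φ s) := (sum_fiberwise_of_maps_to hφT _).symm
    _ = ∑ t ∈ T, #{s ∈ S | φ s = t} * g t := by
      refine sum_congr rfl fun t _ => ?_
      rw [sum_congr rfl fun s hs => congrArg g (mem_filter.1 hs).2, sum_const, nsmul_eq_mul]
    _ ≤ ∑ t ∈ T, k * g t := sum_le_sum fun t ht =>
      mul_le_mul_of_nonneg_right (by exact_mod_cast hfiber t ht) (hg t ht)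
    _ = k * ∑ t ∈ T, g t := (mul_sum _ _ _).symm

theorem maximal_weight_matching_half_general {V : Type*}
    (G : SimpleGraph V) (w : Sym2 V → ℝ) (hw : ∀ e, 0 ≤ w e)
    (M : Finset (Sym2 V))
    (hblock : ∀ e ∈ G.edgeSet, e ∈ M ∨ ∃ e' ∈ M, EdgeAdj e e' ∧ w e ≤ w e') :
    ∀ Mstar : Finset (Sym2 V), IsMatchingIn G Mstar →
      (∑ e ∈ Mstar, w e) / 2 ≤ ∑ e ∈ M, w e := by
  classical
  intro Mstar hMstar
  have hdom : ∀ e ∈ Mstar, ∃ e' ∈ M, EdgeAdj e e' ∧ w e ≤ w e' := fun e he =>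
    (hblock e (hMstar.1 e he)).elim (fun heM => ⟨e, heM, EdgeAdj.refl e, le_rfl⟩) id
  have hcharge : ∑ e ∈ Mstar, w e ≤ (2 : ℕ) * ∑ e ∈ M, w e :=
    sum_le_mul_sum_of_exists_dominating (fun e _ => hw e) hdom
      fun e' _ => hMstar.card_filter_edgeAdj_le_two e'
  rw [div_le_iff₀ two_pos, mul_comm]
  exact_mod_cast hcharge

/-- if every edge of the graph is either in the matching `M` or adjacent to
an `M`-edge of at least its weight, then for any matching `M*`, `w(M) ≥ w(M*)/2`. -/
theorem maximal_weight_matching_half {V : Type*} [Fintype V] [DecidableEq V]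
    (G : SimpleGraph V) (w : Sym2 V → ℝ) (hw : ∀ e, 0 ≤ w e)
    (M : Finset (Sym2 V)) (hM : IsMatchingIn G M)
    (hblock : ∀ e ∈ G.edgeSet, e ∈ M ∨ ∃ e' ∈ M, EdgeAdj e e' ∧ w e ≤ w e') :
    ∀ Mstar : Finset (Sym2 V), IsMatchingIn G Mstar →
      (∑ e ∈ Mstar, w e) / 2 ≤ ∑ e ∈ M, w e :=
  maximal_weight_matching_half_general G w hw M hblock
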